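/- With Z_0 := 0, one has f ∘ T_{[i]} = Z_i − E[Z_{i−1} | 𝓕_i] μ-almost everywhere for every i ≥ 1, and consequently S_n = ∑_{k=1}^{n−1} (Z_k − E[Z_k | 𝓕_{k+1}]) + Z_n μ-almost everywhere for every n ≥ 1. -/

import Mathlib

/-!
Setting: `(X, 𝓕, μ)` a probability space, `A` an index set, `T a : X → X` measurable,
surjective, non-invertible, `μ`-preserving maps, and a fixed sequence `a 1, a 2, … ∈ A`.
`T_{[k]} := T_{a_k} ∘ ⋯ ∘ T_{a_1}`.  The Koopman operator `T̂ g = g ∘ T` acts on `L²(μ)` and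
the Perron–Frobenius operator `T̂*` is its `L²(μ)`-adjoint.
-/

open MeasureTheory ProbabilityTheory Filter
open scoped ENNReal Topology

/-- The Koopman operator `g ↦ g ∘ T` on `L²(μ)`. -/
noncomputable def koopman {X : Type*} [MeasurableSpace X] {μ : Measure X} {T : X → X}
    (hT : MeasurePreserving T μ μ) : Lp ℝ 2 μ →L[ℝ] Lp ℝ 2 μ :=
  (Lp.compMeasurePreservingₗᵢ ℝ T hT).toContinuousLinearMap

/-- The Perron–Frobenius operator: the `L²(μ)`-adjoint of the Koopman operator. -/
noncomputable def PF {X : Type*} [MeasurableSpace X] {μ : Measure X} {T : X → X}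
    (hT : MeasurePreserving T μ μ) : Lp ℝ 2 μ →L[ℝ] Lp ℝ 2 μ :=
  ContinuousLinearMap.adjoint (koopman hT)

/-- `Titer T a k = T_{[k]} = T_{a_k} ∘ ⋯ ∘ T_{a_1}` (the identity for `k = 0`). -/
def Titer {X A : Type*} (T : A → X → X) (a : ℕ → A) : ℕ → X → X
  | 0 => id
  | k + 1 => T (a (k + 1)) ∘ Titer T a k

/-- `PFseg hT a i j = T̂*_{[i..j]} = T̂*_{a_j} ⋯ T̂*_{a_i}` for `i ≤ j`, the identity otherwise. -/
noncomputable def PFseg {X A : Type*} [MeasurableSpace X] {μ : Measure X} {T : A → X → X}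
    (hT : ∀ b, MeasurePreserving (T b) μ μ) (a : ℕ → A) (i : ℕ) :
    ℕ → (Lp ℝ 2 μ →L[ℝ] Lp ℝ 2 μ)
  | 0 => ContinuousLinearMap.id ℝ _
  | j + 1 =>
    if i ≤ j + 1 then (PF (hT (a (j + 1)))).comp (PFseg hT a i j)
    else ContinuousLinearMap.id ℝ _

/-- `T̂*_{b_1} ⋯ T̂*_{b_k} g` for a finite sequence `[b_1, …, b_k]`. -/
noncomputable def PFlist {X A : Type*} [MeasurableSpace X] {μ : Measure X} {T : A → X → X}
    (hT : ∀ b, MeasurePreserving (T b) μ μ) (l : List A) (g : Lp ℝ 2 μ) : Lp ℝ 2 μ :=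
  l.foldr (fun b h => PF (hT b) h) g

/-- `useq hT a f k = u_k = ∑_{i=1}^k T̂*_{[i+1..k]} f`. -/
noncomputable def useq {X A : Type*} [MeasurableSpace X] {μ : Measure X} {T : A → X → X}
    (hT : ∀ b, MeasurePreserving (T b) μ μ) (a : ℕ → A) (f : Lp ℝ 2 μ) (k : ℕ) : Lp ℝ 2 μ :=
  ∑ i ∈ Finset.Icc 1 k, PFseg hT a (i + 1) k f

/-- The Birkhoff-like sums `S_n = ∑_{k=1}^n f ∘ T_{[k]}`. -/
def birkhoffS {X A : Type*} (T : A → X → X) (a : ℕ → A) (f : X → ℝ) (n : ℕ) : X → ℝ :=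
  fun x => ∑ k ∈ Finset.Icc 1 n, f (Titer T a k x)

/-- `cos²χ_k = ‖E[u_k | T_{a_{k+1}}^{-1}(𝓕)]‖²_{L²} / ‖u_k‖²_{L²}` (`= 0` when `u_k = 0`,
by the convention `c / 0 = 0`). -/
noncomputable def cos2chi {X A : Type*} [MeasurableSpace X] (μ : Measure X) {T : A → X → X}
    (hT : ∀ b, MeasurePreserving (T b) μ μ) (a : ℕ → A) (f : Lp ℝ 2 μ) (k : ℕ) : ℝ :=
  (∫ x, ((μ[(useq hT a f k : X → ℝ)|MeasurableSpace.comap (T (a (k + 1))) ‹_›]) x) ^ 2 ∂μ) /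
    ∫ x, ((useq hT a f k : X → ℝ) x) ^ 2 ∂μ

/-- `𝓕_k := T_{[k]}^{-1}(𝓕)`, the pullback σ-algebra. -/
def Fsig {X A : Type*} [m0 : MeasurableSpace X] (T : A → X → X) (a : ℕ → A) (k : ℕ) :
    MeasurableSpace X :=
  MeasurableSpace.comap (Titer T a k) m0

/-- `Z_k := u_k ∘ T_{[k]}`. -/
noncomputable def Zfun {X A : Type*} [MeasurableSpace X] {μ : Measure X} {T : A → X → X}
    (hT : ∀ b, MeasurePreserving (T b) μ μ) (a : ℕ → A) (f : Lp ℝ 2 μ) (k : ℕ) : X → ℝ :=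
  fun x => (useq hT a f k : X → ℝ) (Titer T a k x)

/-!
The Perron–Frobenius operator `T̂*_Q` is the adjoint of composition with `Q`, so testing it
against indicators gives `∫_B T̂*_Q g = ∫_{Q⁻¹B} g`. Consequently, for measure-preserving `Q` and
`S`, conditioning `g ∘ S` on the pullback σ-algebra `(Q ∘ S)⁻¹𝓕` yields `(T̂*_Q g) ∘ Q ∘ S`.
Since `u_{k+1} = T̂*_{a_{k+1}} u_k + f`, composing with `T_{[k+1]}` gives
`f ∘ T_{[k+1]} = Z_{k+1} − E[Z_k | 𝓕_{k+1}]`, and summing these identities telescopes to the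
formula for `S_n` because `Z_0 = 0`.
-/

section PerronFrobenius

variable {X : Type*} [m0 : MeasurableSpace X] {μ : Measure X}

theorem MeasureTheory.MeasurePreserving.setIntegral_preimage_comp {R : X → X}
    (hR : MeasurePreserving R μ μ) {h : X → ℝ} (hh : AEStronglyMeasurable h μ) {B : Set X}
    (hB : MeasurableSet B) : ∫ x in R ⁻¹' B, h (R x) ∂μ = ∫ x in B, h x ∂μ := by
  have := setIntegral_map hB (hR.map_eq ▸ hh) hR.aemeasurable
  rwa [hR.map_eq, eq_comm] at this

theorem setIntegral_PF [IsFiniteMeasure μ] {Q : X → X} (hQ : MeasurePreserving Q μ μ)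
    (g : Lp ℝ 2 μ) {B : Set X} (hB : MeasurableSet B) :
    ∫ x in B, PF hQ g x ∂μ = ∫ x in Q ⁻¹' B, g x ∂μ := by
  rw [← L2.inner_indicatorConstLp_one hB (measure_ne_top μ B), PF,
    ContinuousLinearMap.adjoint_inner_right]
  exact L2.inner_indicatorConstLp_one (hQ.measurable hB) (measure_ne_top μ _) g

theorem condExp_comp_eq_PF_comp [IsFiniteMeasure μ] {Q S : X → X}
    (hQ : MeasurePreserving Q μ μ) (hS : MeasurePreserving S μ μ) (g : Lp ℝ 2 μ) :
    μ[fun x => g (S x) | MeasurableSpace.comap (fun x => Q (S x)) m0]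
      =ᵐ[μ] fun x => PF hQ g (Q (S x)) := by
  have hR : MeasurePreserving (fun x => Q (S x)) μ μ := hQ.comp hS
  have integrable_comp {P : X → X} (hP : MeasurePreserving P μ μ) (h : Lp ℝ 2 μ) :
      Integrable (fun x => h (P x)) μ :=
    (hP.integrable_comp (Lp.aestronglyMeasurable h)).mpr ((Lp.memLp h).integrable one_le_two)
  refine (ae_eq_condExp_of_forall_setIntegral_eq hR.measurable.comap_le (integrable_comp hS g)
    (fun s _ _ => (integrable_comp hR _).integrableOn) ?_ ?_).symm
  · rintro s ⟨B, hB, rfl⟩ -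
    calc ∫ x in (fun x => Q (S x)) ⁻¹' B, PF hQ g (Q (S x)) ∂μ
        = ∫ x in B, PF hQ g x ∂μ :=
          hR.setIntegral_preimage_comp (Lp.aestronglyMeasurable _) hB
      _ = ∫ x in Q ⁻¹' B, g x ∂μ := setIntegral_PF hQ g hB
      _ = ∫ x in S ⁻¹' (Q ⁻¹' B), g (S x) ∂μ :=
          (hS.setIntegral_preimage_comp (Lp.aestronglyMeasurable g) (hQ.measurable hB)).symm
  · exact ((Lp.stronglyMeasurable _).comp_measurable
      (comap_measurable _)).aestronglyMeasurable

end PerronFrobenius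

section Sequential

variable {X A : Type*} [MeasurableSpace X] {μ : Measure X} {T : A → X → X}

theorem measurePreserving_Titer (hT : ∀ b, MeasurePreserving (T b) μ μ) (a : ℕ → A) :
    ∀ k, MeasurePreserving (Titer T a k) μ μ
  | 0 => MeasurePreserving.id μ
  | k + 1 => (hT (a (k + 1))).comp (measurePreserving_Titer hT a k)

theorem useq_zero (hT : ∀ b, MeasurePreserving (T b) μ μ) (a : ℕ → A) (f : Lp ℝ 2 μ) :
    useq hT a f 0 = 0 := by
  simp [useq]

theorem useq_succ (hT : ∀ b, MeasurePreserving (T b) μ μ) (a : ℕ → A) (f : Lp ℝ 2 μ)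
    (k : ℕ) : useq hT a f (k + 1) = PF (hT (a (k + 1))) (useq hT a f k) + f := by
  rw [useq, Finset.sum_Icc_succ_top (Nat.le_add_left 1 k), useq, map_sum]
  congr 1
  · refine Finset.sum_congr rfl fun i hi => ?_
    rw [PFseg, if_pos (by grind)]
    rfl
  · rw [PFseg, if_neg (by omega)]
    rfl

theorem Zfun_zero_ae_eq_zero (hT : ∀ b, MeasurePreserving (T b) μ μ) (a : ℕ → A)
    (f : Lp ℝ 2 μ) : Zfun hT a f 0 =ᵐ[μ] 0 := by
  unfold Zfun
  rw [useq_zero]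
  exact Lp.coeFn_zero ℝ 2 μ

theorem comp_Titer_succ_ae_eq [IsFiniteMeasure μ] (hT : ∀ b, MeasurePreserving (T b) μ μ)
    (a : ℕ → A) (f : Lp ℝ 2 μ) (k : ℕ) :
    (fun x => f (Titer T a (k + 1) x)) =ᵐ[μ]
      fun x => Zfun hT a f (k + 1) x - μ[Zfun hT a f k | Fsig T a (k + 1)] x := by
  have hcondExp : μ[Zfun hT a f k | Fsig T a (k + 1)] =ᵐ[μ]
      fun x => PF (hT (a (k + 1))) (useq hT a f k) (Titer T a (k + 1) x) :=
    condExp_comp_eq_PF_comp (hT (a (k + 1))) (measurePreserving_Titer hT a k) _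
  have hu : (useq hT a f (k + 1) : X → ℝ) =ᵐ[μ]
      fun x => PF (hT (a (k + 1))) (useq hT a f k) x + f x := by
    rw [useq_succ]
    exact Lp.coeFn_add _ _
  filter_upwards [hcondExp,
    (measurePreserving_Titer hT a (k + 1)).quasiMeasurePreserving.ae_eq_comp hu] with x hEx hux
  simp only [Function.comp_apply] at hux
  rw [hEx, Zfun, hux]
  ring

end Sequential

theorem Finset.sum_Icc_succ_eq_sum_Icc_sub_add {s z e : ℕ → ℝ}
    (hs : ∀ k, s (k + 1) = z (k + 1) - e k) (he : e 0 = 0) (n : ℕ) :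
    ∑ k ∈ Finset.Icc 1 (n + 1), s k = ∑ k ∈ Finset.Icc 1 n, (z k - e k) + z (n + 1) := by
  induction n with
  | zero => simp [hs, he]
  | succ n ih =>
    rw [Finset.sum_Icc_succ_top (by omega), ih, hs, Finset.sum_Icc_succ_top (by omega)]
    ring

theorem birkhoff_eq_martingale_decomposition_general
    {X : Type*} [MeasurableSpace X] (μ : Measure X) [IsProbabilityMeasure μ]
    {A : Type*} (T : A → X → X)
    (hT : ∀ b, MeasurePreserving (T b) μ μ)
    (a : ℕ → A) (f : Lp ℝ 2 μ) :
    (∀ i : ℕ, 1 ≤ i →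
      (fun x => (f : X → ℝ) (Titer T a i x)) =ᵐ[μ]
        fun x => Zfun hT a f i x - (μ[Zfun hT a f (i - 1)|Fsig T a i]) x) ∧
    (∀ n : ℕ, 1 ≤ n →
      birkhoffS T a (f : X → ℝ) n =ᵐ[μ]
        fun x => (∑ k ∈ Finset.Icc 1 (n - 1),
          (Zfun hT a f k x - (μ[Zfun hT a f k|Fsig T a (k + 1)]) x)) + Zfun hT a f n x) := by
  have hstep := comp_Titer_succ_ae_eq hT a f
  refine ⟨fun i hi => ?_, fun n hn => ?_⟩
  · obtain ⟨k, rfl⟩ := Nat.exists_eq_add_of_le' hi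
    exact hstep k
  · obtain ⟨m, rfl⟩ := Nat.exists_eq_add_of_le' hn
    have hE0 : μ[Zfun hT a f 0 | Fsig T a 1] =ᵐ[μ] 0 :=
      (condExp_congr_ae (Zfun_zero_ae_eq_zero hT a f)).trans (by rw [condExp_zero])
    filter_upwards [ae_all_iff.2 hstep, hE0] with x hx hx0
    exact Finset.sum_Icc_succ_eq_sum_Icc_sub_add hx hx0 m

/-- With `Z_0 = 0`, one has `f ∘ T_{[i]} = Z_i − E[Z_{i−1} | 𝓕_i]` `μ`-a.e. for every `i ≥ 1`,
and consequently `S_n = ∑_{k=1}^{n−1} (Z_k − E[Z_k | 𝓕_{k+1}]) + Z_n` `μ`-a.e. for all `n ≥ 1`. -/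
theorem birkhoff_eq_martingale_decomposition
    {X : Type*} [MeasurableSpace X] (μ : Measure X) [IsProbabilityMeasure μ]
    {A : Type*} (T : A → X → X)
    (hTmeas : ∀ b, Measurable (T b))
    (hT : ∀ b, MeasurePreserving (T b) μ μ)
    (hTsurj : ∀ b, Function.Surjective (T b))
    (hTnoninv : ∀ b, ¬Function.Injective (T b))
    (a : ℕ → A) (f : Lp ℝ 2 μ) (hfmean : ∫ x, f x ∂μ = 0) :
    (∀ i : ℕ, 1 ≤ i →
      (fun x => (f : X → ℝ) (Titer T a i x)) =ᵐ[μ]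
        fun x => Zfun hT a f i x - (μ[Zfun hT a f (i - 1)|Fsig T a i]) x) ∧
    (∀ n : ℕ, 1 ≤ n →
      birkhoffS T a (f : X → ℝ) n =ᵐ[μ]
        fun x => (∑ k ∈ Finset.Icc 1 (n - 1),
          (Zfun hT a f k x - (μ[Zfun hT a f k|Fsig T a (k + 1)]) x)) + Zfun hT a f n x) :=
  birkhoff_eq_martingale_decomposition_general μ T hT a f
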